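/- arXiv:1703.09886 — 8 statements merged into one kernel-verified Lean document; each statement's English description precedes it below -/
import Mathlib

section
/- Fix positive integers n_1,...,n_k and r with 0 ≤ r. Let S(j_1,...,j_k) = {(a,b) ∈ ℤ² : 1 ≤ a ≤ k, 1 ≤ b ≤ j_a} for a tuple (j_1,...,j_k) with 0 ≤ j_a ≤ n_a and j_1+...+j_k = r. For a permutation σ of S(j_1,...,j_k), call (a,b) a decrease if σ(a,b) = (a',b') with a' < a, and let Dec(σ) be the number of decreases. Then the maximum of Dec(σ) over all permutations σ of S(j_1,...,j_k) equals r − max(j_1,...,j_k). -/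
/-!
Upper bound: count the non-decreases `x.1 ≤ (σ x).1` instead. Fix a column `a`. An element `x`
with `(σ x).1 = a` is a non-decrease when `x.1 ≤ a`; otherwise `σ` carries `x` into the set
`{x.1 ≤ a}`, and `σ` carries as many elements into that set as out of it, each of the latter
being a non-decrease. So every `j a` is at most the number of non-decreases.

Lower bound: read `S(j)` row by row, row `b < max j` being `{a | b < j a}`, and rotate every row
down by one step. Within a row only the minimum is not a decrease, so there are `r - max j`
decreases.
-/

/-- The number of decreases of a permutation `σ` of `S(j_1,...,j_k)`, where
`S(j_1,...,j_k)` is modelled as the sigma type `(a : Fin k) × Fin (j a)`: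
an element `(a,b)` is a decrease if the first coordinate of `σ (a,b)` is strictly
smaller than `a`. -/
def Dec {k : ℕ} {j : Fin k → ℕ} (σ : Equiv.Perm ((a : Fin k) × Fin (j a))) : ℕ :=
  (Finset.univ.filter (fun x : (a : Fin k) × Fin (j a) => (σ x).1 < x.1)).card

open Finset

section Perm

variable {α : Type*} [Fintype α]

theorem card_filter_perm_apply (σ : Equiv.Perm α) (p : α → Prop) [DecidablePred p] :
    #{x | p (σ x)} = #{x | p x} :=
  card_equiv σ (by simp)

theorem card_filter_exits_eq_card_filter_entries (σ : Equiv.Perm α) (p : α → Prop)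
    [DecidablePred p] : #{x | p x ∧ ¬p (σ x)} = #{x | p (σ x) ∧ ¬p x} := by
  have hp : #{x | p x ∧ p (σ x)} + #{x | p x ∧ ¬p (σ x)} = #{x | p x} := by
    rw [← filter_filter, ← filter_filter]
    exact card_filter_add_card_filter_not _
  have hσp : #{x | p (σ x) ∧ p x} + #{x | p (σ x) ∧ ¬p x} = #{x | p (σ x)} := by
    rw [← filter_filter, ← filter_filter]
    exact card_filter_add_card_filter_not _
  have hcomm : #{x | p (σ x) ∧ p x} = #{x | p x ∧ p (σ x)} := by simp only [and_comm]
  rw [hcomm, card_filter_perm_apply] at hσp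
  omega

theorem card_filter_eq_le_card_filter_le_apply {β : Type*} [LinearOrder β]
    (σ : Equiv.Perm α) (f : α → β) (b : β) : #{x | f x = b} ≤ #{x | f x ≤ f (σ x)} := by
  classical
  set rises : Finset α := {x | f (σ x) = b ∧ f x ≤ b}
  set leaves : Finset α := {x | f x ≤ b ∧ ¬f (σ x) ≤ b}
  have hleaves : #leaves = #{x | f (σ x) ≤ b ∧ ¬f x ≤ b} :=
    card_filter_exits_eq_card_filter_entries σ (fun x => f x ≤ b)
  have hdisj : Disjoint rises leaves := disjoint_filter.2 fun x _ h h' => h'.2 h.1.le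
  calc #{x | f x = b}
      = #{x | f (σ x) = b} := (card_filter_perm_apply σ _).symm
    _ = #rises + #{x | f (σ x) = b ∧ ¬f x ≤ b} := by
        simp only [rises, ← filter_filter, card_filter_add_card_filter_not]
    _ ≤ #rises + #{x | f (σ x) ≤ b ∧ ¬f x ≤ b} := by
        gcongr with x
        exact le_of_eq
    _ = #(rises ∪ leaves) := by rw [card_union_of_disjoint hdisj, hleaves]
    _ ≤ #{x | f x ≤ f (σ x)} := by
        gcongr
        intro x
        simp only [rises, leaves, mem_union, mem_filter, mem_univ, true_and]
        rintro (⟨hσx, hx⟩ | ⟨hx, hσx⟩)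
        · exact hσx ▸ hx
        · exact hx.trans (not_le.1 hσx).le

end Perm

section RotateDown

variable (α : Type*) [Fintype α] [LinearOrder α]

/-- Sends every element to its predecessor and the minimum to the maximum. -/
noncomputable def rotateDown : Equiv.Perm α :=
  (Fintype.orderIsoFinOfCardEq α rfl).toEquiv.permCongr (finRotate _).symm

theorem card_filter_rotateDown_lt [Nonempty α] :
    #{x | rotateDown α x < x} = Fintype.card α - 1 := by
  have : NeZero (Fintype.card α) := ⟨Fintype.card_ne_zero⟩
  calc #{x | rotateDown α x < x}
      = #{i : Fin (Fintype.card α) | (finRotate _).symm i < i} :=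
        (card_equiv (Fintype.orderIsoFinOfCardEq α rfl).toEquiv fun i => by
          simp [rotateDown]).symm
    _ = #(univ.erase (0 : Fin (Fintype.card α))) := by
        simp only [finRotate_symm_lt_iff_ne_zero, filter_ne']
    _ = Fintype.card α - 1 := by simp

end RotateDown

section Transpose

variable {ι : Type*} (j : ι → ℕ) {m : ℕ} (hm : ∀ a, j a ≤ m)

/-- Reads `S(j)` row by row instead of column by column: `(a, b)` becomes `(b, a)`. -/
def transposeEquiv : ((a : ι) × Fin (j a)) ≃ ((b : Fin m) × {a : ι // b < j a}) where
  toFun x := ⟨⟨x.2, x.2.isLt.trans_le (hm x.1)⟩, ⟨x.1, x.2.isLt⟩⟩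
  invFun y := ⟨y.2.1, ⟨y.1, y.2.2⟩⟩
  left_inv _ := rfl
  right_inv _ := rfl

end Transpose

section Decreases

variable {k : ℕ} {j : Fin k → ℕ}

theorem card_filter_fst_eq (a : Fin k) : #{x : (a : Fin k) × Fin (j a) | x.1 = a} = j a := by
  rw [card_filter, Fintype.sum_sigma]
  simp [apply_ite Finset.card]

theorem dec_le_sum_sub_sup (σ : Equiv.Perm ((a : Fin k) × Fin (j a))) :
    Dec σ ≤ ∑ a, j a - univ.sup j := by
  have hsplit : Dec σ + #{x | x.1 ≤ (σ x).1} = ∑ a, j a := by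
    simp only [Dec, ← not_lt, card_filter_add_card_filter_not, card_univ, Fintype.card_sigma,
      Fintype.card_fin]
  have hsup : univ.sup j ≤ #{x | x.1 ≤ (σ x).1} := Finset.sup_le fun a _ =>
    card_filter_fst_eq (j := j) a ▸ card_filter_eq_le_card_filter_le_apply σ Sigma.fst a
  omega

noncomputable def rotateRowsDown (j : Fin k → ℕ) : Equiv.Perm ((a : Fin k) × Fin (j a)) :=
  (transposeEquiv j fun a => le_sup (mem_univ a)).symm.permCongr
    (Equiv.sigmaCongrRight fun _ => rotateDown _)

theorem dec_rotateRowsDown : Dec (rotateRowsDown j) = ∑ a, j a - univ.sup j := by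
  set E := transposeEquiv j fun a => le_sup (f := j) (mem_univ a)
  have hrow : ∀ b : Fin (univ.sup j), Nonempty {a : Fin k // b < j a} := fun b => by
    obtain ⟨a, -, ha⟩ := Finset.lt_sup_iff.1 b.isLt
    exact ⟨⟨a, ha⟩⟩
  calc Dec (rotateRowsDown j)
      = #{y : (b : Fin (univ.sup j)) × {a : Fin k // b < j a} | rotateDown _ y.2 < y.2} :=
        card_equiv E fun x => by
          simp [rotateRowsDown, E, transposeEquiv, ← Subtype.coe_lt_coe]
    _ = ∑ b : Fin (univ.sup j), (Fintype.card {a : Fin k // b < j a} - 1) := by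
        rw [card_filter, Fintype.sum_sigma]
        refine sum_congr rfl fun b _ => ?_
        rw [← card_filter]
        exact card_filter_rotateDown_lt _
    _ = ∑ a, j a - univ.sup j := by
        rw [sum_tsub_distrib _ fun b _ => Fintype.card_pos, ← Fintype.card_sigma,
          ← Fintype.card_congr E]
        simp

end Decreases

theorem max_dec_eq_general (k r : ℕ) (j : Fin k → ℕ) (hr : ∑ a, j a = r) :
    (∀ σ : Equiv.Perm ((a : Fin k) × Fin (j a)), Dec σ ≤ r - Finset.univ.sup j) ∧
    (∃ σ : Equiv.Perm ((a : Fin k) × Fin (j a)), Dec σ = r - Finset.univ.sup j) := by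
  subst hr
  exact ⟨dec_le_sum_sub_sup, rotateRowsDown j, dec_rotateRowsDown⟩

/-- The maximum of `Dec σ` over all permutations of `S(j_1,...,j_k)` equals
`r - max(j_1,...,j_k)`. -/
theorem max_dec_eq (k r : ℕ) (n : Fin k → ℕ) (hn : ∀ a, 0 < n a)
    (j : Fin k → ℕ) (hj : ∀ a, j a ≤ n a) (hr : ∑ a, j a = r) :
    (∀ σ : Equiv.Perm ((a : Fin k) × Fin (j a)), Dec σ ≤ r - Finset.univ.sup j) ∧
    (∃ σ : Equiv.Perm ((a : Fin k) × Fin (j a)), Dec σ = r - Finset.univ.sup j) :=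
  max_dec_eq_general k r j hr
end

section
/- Let σ be a permutation of the finite set S(j_1,...,j_k) = {(a,b) : 1 ≤ a ≤ k, 1 ≤ b ≤ j_a}, where j_1+...+j_k = r. If σ is not a single cycle, then there exists a cyclic permutation σ̂ of S(j_1,...,j_k) with Dec(σ) ≤ Dec(σ̂), where Dec counts pairs (a,b) such that the first coordinate of σ(a,b) is strictly smaller than a. -/
/-!
Multiplying `σ` by the transposition of two points lying in different cycles merges those two
cycles and changes `σ` only at those two points. Choosing in each cycle a point where the first
coordinate is minimal, neither point is a decrease of `σ`, so every decrease of `σ` survives.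
Repeating this until a single cycle is left gives `σ̂`.
-/

open Equiv Equiv.Perm Finset

namespace Equiv.Perm

variable {α : Type*} {x y z : α}

section Merge

variable [DecidableEq α] [Finite α] {f : Perm α}

theorem sameCycle_mul_swap_of_sameCycle_right (hxy : ¬ f.SameCycle x y)
    (hz : f.SameCycle y z) : (f * swap x y).SameCycle x z := by
  set g := f * swap x y
  have hgx : g x = f y := by simp [g]
  have hfy : g.SameCycle x (f y) := hgx ▸ sameCycle_apply_right.2 (SameCycle.refl g x)
  -- `g` agrees with `f` on the `f`-cycle of `y` except at `y` itself, where `g y = f x`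
  have hpow : ∀ n : ℕ, g.SameCycle x ((f ^ (n + 1)) y) := by
    intro n
    induction n with
    | zero => simpa using hfy
    | succ n ih =>
      rw [pow_succ', mul_apply]
      by_cases hy : (f ^ (n + 1)) y = y
      · rwa [hy]
      have hx : (f ^ (n + 1)) y ≠ x := fun h => hxy (h ▸ (sameCycle_pow_right.2 .rfl)).symm
      have hg : g ((f ^ (n + 1)) y) = f ((f ^ (n + 1)) y) := by
        simp [g, swap_apply_of_ne_of_ne hx hy]
      exact hg ▸ sameCycle_apply_right.2 ih
  obtain ⟨i, hi, -, rfl⟩ := hz.exists_pow_eq''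
  obtain ⟨n, rfl⟩ := Nat.exists_eq_add_of_lt hi
  simpa using hpow n

theorem sameCycle_mul_swap_of_sameCycle (hxy : ¬ f.SameCycle x y)
    (hz : f.SameCycle x z ∨ f.SameCycle y z) : (f * swap x y).SameCycle x z := by
  have hy : (f * swap x y).SameCycle x y := sameCycle_mul_swap_of_sameCycle_right hxy .rfl
  rcases hz with hz | hz
  · rw [swap_comm] at hy ⊢
    exact hy.trans (sameCycle_mul_swap_of_sameCycle_right (fun h => hxy h.symm) hz)
  · exact sameCycle_mul_swap_of_sameCycle_right hxy hz

end Merge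

section Decreases

variable {β : Type*} [LinearOrder β] [Fintype α] (w : α → β)

def decreases (σ : Perm α) : Finset α :=
  {x | w (σ x) < w x}

theorem mem_decreases {σ : Perm α} : x ∈ decreases w σ ↔ w (σ x) < w x := by
  simp [decreases]

variable [DecidableEq α]

theorem decreases_subset_mul_swap {σ : Perm α} (hx : x ∉ decreases w σ)
    (hy : y ∉ decreases w σ) : decreases w σ ⊆ decreases w (σ * swap x y) := by
  intro z hz
  have hσz : (σ * swap x y) z = σ z := by
    rw [mul_apply, swap_apply_of_ne_of_ne (ne_of_mem_of_not_mem hz hx)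
      (ne_of_mem_of_not_mem hz hy)]
  rwa [mem_decreases, hσz, ← mem_decreases]

theorem exists_sameCycle_not_mem_decreases (σ : Perm α) (x : α) :
    ∃ y, σ.SameCycle x y ∧ y ∉ decreases w σ := by
  obtain ⟨y, hy, hmin⟩ := exists_min_image {y | σ.SameCycle x y} w ⟨x, by simp [SameCycle.refl]⟩
  simp only [mem_filter, mem_univ, true_and] at hy hmin
  exact ⟨y, hy, by simpa [mem_decreases] using hmin _ (sameCycle_apply_right.2 hy)⟩

theorem exists_merge_cycles (σ : Perm α) (hxy : ¬ σ.SameCycle x y) :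
    ∃ τ : Perm α, decreases w σ ⊆ decreases w τ ∧ τ.SameCycle x y ∧
      ∀ z, σ.SameCycle x z → τ.SameCycle x z := by
  obtain ⟨x', hx', hx'dec⟩ := exists_sameCycle_not_mem_decreases w σ x
  obtain ⟨y', hy', hy'dec⟩ := exists_sameCycle_not_mem_decreases w σ y
  have hx'y' : ¬ σ.SameCycle x' y' := fun h => hxy (hx'.trans (h.trans hy'.symm))
  have hx : (σ * swap x' y').SameCycle x' x :=
    sameCycle_mul_swap_of_sameCycle hx'y' (.inl hx'.symm)
  refine ⟨σ * swap x' y', decreases_subset_mul_swap w hx'dec hy'dec,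
    hx.symm.trans (sameCycle_mul_swap_of_sameCycle hx'y' (.inr hy'.symm)),
    fun z hz => hx.symm.trans (sameCycle_mul_swap_of_sameCycle hx'y' (.inl (hx'.symm.trans hz)))⟩

theorem exists_isCycleOn_univ_decreases_subset (σ : Perm α) :
    ∃ τ : Perm α, τ.IsCycleOn _root_.Set.univ ∧ decreases w σ ⊆ decreases w τ := by
  cases isEmpty_or_nonempty α with
  | inl _ => exact ⟨σ, isCycleOn_of_subsingleton σ _, subset_rfl⟩
  | inr h =>
    obtain ⟨x⟩ := h
    induction h : #{z | ¬ σ.SameCycle x z} using Nat.strong_induction_on generalizing σ with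
    | _ n ih =>
      by_cases hall : ∀ z, σ.SameCycle x z
      · exact ⟨σ, ⟨Set.bijOn_univ.2 σ.bijective, fun y _ z _ => (hall y).symm.trans (hall z)⟩,
          subset_rfl⟩
      obtain ⟨y, hy⟩ := not_forall.1 hall
      obtain ⟨τ, hdec, hτy, hτ⟩ := exists_merge_cycles w σ hy
      have hlt : #{z | ¬ τ.SameCycle x z} < n := by
        refine h ▸ card_lt_card ⟨fun z => ?_, fun hsub => ?_⟩
        · simpa only [mem_filter, mem_univ, true_and] using mt (hτ z)
        · simpa [hτy, hy] using @hsub y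
      obtain ⟨ρ, hρ, hdec'⟩ := ih _ hlt τ rfl
      exact ⟨ρ, hρ, hdec.trans hdec'⟩

end Decreases

end Equiv.Perm

theorem exists_cycle_dec_ge_general (k : ℕ) (j : Fin k → ℕ)
    (σ : Equiv.Perm ((a : Fin k) × Fin (j a))) :
    ∃ σ' : Equiv.Perm ((a : Fin k) × Fin (j a)),
      σ'.IsCycleOn (Set.univ : Set ((a : Fin k) × Fin (j a))) ∧ Dec σ ≤ Dec σ' := by
  obtain ⟨τ, hτ, hdec⟩ := exists_isCycleOn_univ_decreases_subset Sigma.fst σ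
  exact ⟨τ, hτ, card_le_card hdec⟩

/-- If `σ` is a permutation of `S(j_1,...,j_k)` which is not a single cycle, then there is
a cyclic permutation `σ̂` (a single cycle on all of `S(j_1,...,j_k)`) with
`Dec σ ≤ Dec σ̂`. -/
theorem exists_cycle_dec_ge (k r : ℕ) (j : Fin k → ℕ) (hr : ∑ a, j a = r)
    (σ : Equiv.Perm ((a : Fin k) × Fin (j a)))
    (hσ : ¬ σ.IsCycleOn (Set.univ : Set ((a : Fin k) × Fin (j a)))) :
    ∃ σ' : Equiv.Perm ((a : Fin k) × Fin (j a)),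
      σ'.IsCycleOn (Set.univ : Set ((a : Fin k) × Fin (j a))) ∧ Dec σ ≤ Dec σ' :=
  exists_cycle_dec_ge_general k j σ
end

section
/- Fix a partition n = n_1 + ... + n_k of a positive integer n and let δ_1 ≥ δ_2 ≥ ... ≥ δ_m be the conjugate partition. Define the nondecreasing sequence m_0 ≤ m_1 ≤ ... ≤ m_{n-1} obtained by listing value i with multiplicity δ_i for i = 1,...,m (i.e., δ_1 ones, then δ_2 twos, etc.). Then for every r with 1 ≤ r ≤ n, m_{r-1} = min { max(j_1,...,j_k) : j_a ∈ ℤ, 0 ≤ j_a ≤ n_a, j_1 + ... + j_k = r }. -/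
/-!
Both sides equal the least `t` with `r ≤ ∑ₐ min (n_a, t)`. On the left, `∑_{i<t} δ_{i+1}` counts
the cells in the first `t` columns of the Young diagram of `(n_a)`, which is `∑ₐ min (n_a, t)`,
and the entry of index `r - 1` of the sequence is the first column at which this count
reaches `r`. On the right, some `j ≤ n` with `∑ j = r` has all entries `≤ t` exactly when
`r ≤ ∑ₐ min (n_a, t)`, by filling the capacities `min (n_a, t)` one unit at a time.
-/

open Finset

theorem Nat.sInf_upperClosure (s : Set ℕ) : sInf (upperClosure s : Set ℕ) = sInf s := by
  rcases s.eq_empty_or_nonempty with rfl | hs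
  · simp
  · refine le_antisymm (csInf_le' (subset_upperClosure (Nat.sInf_mem hs))) ?_
    obtain ⟨a, has, hale⟩ := mem_upperClosure.1 (Nat.sInf_mem (hs.mono subset_upperClosure))
    exact (csInf_le' has).trans hale

theorem List.length_flatMap_range_replicate (c : ℕ → ℕ) (M : ℕ) :
    ((List.range M).flatMap fun i => replicate (c i) (i + 1)).length =
      ∑ i ∈ Finset.range M, c i := by
  induction M with
  | zero => simp
  | succ M ih => simp [List.range_succ, ih, Finset.sum_range_succ]

theorem List.getD_flatMap_range_replicate (c : ℕ → ℕ) {M q : ℕ}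
    (hq : q < ∑ i ∈ Finset.range M, c i) :
    ((List.range M).flatMap fun i => replicate (c i) (i + 1)).getD q 0 =
      sInf {t | q < ∑ i ∈ Finset.range t, c i} := by
  induction M with
  | zero => simp at hq
  | succ M ih =>
    rw [List.range_succ, List.flatMap_append, List.flatMap_singleton]
    by_cases hqM : q < ∑ i ∈ Finset.range M, c i
    · rw [List.getD_append _ _ _ _ (by rwa [length_flatMap_range_replicate]), ih hqM]
    have hclosed : ∀ a b, a ≤ b → a ∈ {t | q < ∑ i ∈ Finset.range t, c i} →
        b ∈ {t | q < ∑ i ∈ Finset.range t, c i} := fun a b hab (h : q < _) =>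
      h.trans_le (Finset.sum_le_sum_of_subset (Finset.range_subset_range.2 hab))
    rw [Finset.sum_range_succ] at hq
    rw [List.getD_append_right _ _ _ _ (by rw [length_flatMap_range_replicate]; omega),
      length_flatMap_range_replicate,
      List.getD_replicate (x := M + 1) (show q - ∑ i ∈ Finset.range M, c i < c M by omega),
      eq_comm, Nat.sInf_upward_closed_eq_succ_iff hclosed]
    exact ⟨by simpa [Finset.sum_range_succ] using hq, hqM⟩

theorem Finset.sum_range_card_filter_le {ι : Type*} (s : Finset ι) (f : ι → ℕ) (t : ℕ) :
    ∑ i ∈ range t, #{a ∈ s | i + 1 ≤ f a} = ∑ a ∈ s, min (f a) t := by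
  induction t with
  | zero => simp
  | succ t ih =>
    rw [sum_range_succ, ih, card_filter, ← sum_add_distrib]
    exact sum_congr rfl fun a _ => by split_ifs <;> omega

variable {ι : Type*} [Fintype ι]

theorem exists_le_and_sum_eq_of_le_sum (b : ι → ℕ) {r : ℕ} (hr : r ≤ ∑ a, b a) :
    ∃ j : ι → ℕ, (∀ a, j a ≤ b a) ∧ ∑ a, j a = r := by
  classical
  induction r with
  | zero => exact ⟨0, fun _ => Nat.zero_le _, by simp⟩
  | succ r ih =>
    obtain ⟨j, hjb, hj⟩ := ih (by omega)
    obtain ⟨a, ha⟩ : ∃ a, j a < b a := by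
      by_contra! hc
      have := sum_le_sum (s := univ) fun a _ => hc a
      omega
    refine ⟨j + Pi.single a 1, fun x => ?_, by simp [sum_add_distrib, hj]⟩
    rcases eq_or_ne x a with rfl | hx
    · simpa using ha
    · simpa [hx] using hjb x

theorem exists_sum_eq_sup_le_iff (n : ι → ℕ) (r t : ℕ) :
    (∃ j : ι → ℕ, (∀ a, j a ≤ n a) ∧ ∑ a, j a = r ∧ univ.sup j ≤ t) ↔
      r ≤ ∑ a, min (n a) t := by
  constructor
  · rintro ⟨j, hjn, rfl, hjt⟩
    exact sum_le_sum fun a _ => le_min (hjn a) ((le_sup (mem_univ a)).trans hjt)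
  · intro hr
    obtain ⟨j, hjb, hj⟩ := exists_le_and_sum_eq_of_le_sum _ hr
    exact ⟨j, fun a => (hjb a).trans (min_le_left _ _), hj,
      Finset.sup_le fun a _ => (hjb a).trans (min_le_right _ _)⟩

theorem sInf_sup_eq_sInf_le_sum_min (n : ι → ℕ) (r : ℕ) :
    sInf {v | ∃ j : ι → ℕ, (∀ a, j a ≤ n a) ∧ ∑ a, j a = r ∧ v = univ.sup j} =
      sInf {t | r ≤ ∑ a, min (n a) t} := by
  rw [← Nat.sInf_upperClosure]
  congr 1
  ext t
  simp only [SetLike.mem_coe, mem_upperClosure, Set.mem_ofPred_eq, ← exists_sum_eq_sup_le_iff]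
  constructor
  · rintro ⟨_, ⟨j, hjn, hj, rfl⟩, hjt⟩
    exact ⟨j, hjn, hj, hjt⟩
  · rintro ⟨j, hjn, hj, hjt⟩
    exact ⟨_, ⟨j, hjn, hj, rfl⟩, hjt⟩

theorem mseq_eq_min_max_general (k n : ℕ) (nn : Fin k → ℕ)
    (hsum : ∑ a, nn a = n)
    (δ : ℕ → ℕ) (hδ : ∀ i, δ i = (Finset.univ.filter (fun a : Fin k => i ≤ nn a)).card)
    (M : ℕ) (hM : M = Finset.univ.sup nn)
    (mseq : List ℕ)
    (hm : mseq = (List.range M).flatMap fun i => List.replicate (δ (i + 1)) (i + 1))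
    (r : ℕ) (hr1 : 1 ≤ r) (hrn : r ≤ n) :
    mseq.getD (r - 1) 0 =
      sInf { v : ℕ | ∃ j : Fin k → ℕ,
        (∀ a, j a ≤ nn a) ∧ (∑ a, j a = r) ∧ v = Finset.univ.sup j } := by
  subst hm hM
  have hcol (t : ℕ) : ∑ i ∈ range t, δ (i + 1) = ∑ a, min (nn a) t := by
    simpa only [hδ] using sum_range_card_filter_le univ nn t
  have hr : r - 1 < ∑ i ∈ range (univ.sup nn), δ (i + 1) := by
    rw [hcol, sum_congr rfl fun a _ => min_eq_left (le_sup (mem_univ a)), hsum]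
    omega
  rw [List.getD_flatMap_range_replicate _ hr, sInf_sup_eq_sInf_le_sum_min]
  congr 1
  ext t
  rw [Set.mem_ofPred_eq, Set.mem_ofPred_eq, hcol]
  omega

/-- For every `r` with `1 ≤ r ≤ n`, the `r`-th term `m_{r-1}` of the nondecreasing
sequence consisting of `δ_1` ones, `δ_2` twos, ..., `δ_m` copies of `m` (where
`δ_i = #{a : n_a ≥ i}` is the conjugate partition of `(n_1,...,n_k)`) equals
`min { max(j_1,...,j_k) : 0 ≤ j_a ≤ n_a, j_1 + ... + j_k = r }`. -/
theorem mseq_eq_min_max (k n : ℕ) (nn : Fin k → ℕ) (hn : ∀ a, 0 < nn a)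
    (hsum : ∑ a, nn a = n)
    (δ : ℕ → ℕ) (hδ : ∀ i, δ i = (Finset.univ.filter (fun a : Fin k => i ≤ nn a)).card)
    (M : ℕ) (hM : M = Finset.univ.sup nn)
    (mseq : List ℕ)
    (hm : mseq = (List.range M).flatMap fun i => List.replicate (δ (i + 1)) (i + 1))
    (r : ℕ) (hr1 : 1 ≤ r) (hrn : r ≤ n) :
    mseq.getD (r - 1) 0 =
      sInf { v : ℕ | ∃ j : Fin k → ℕ,
        (∀ a, j a ≤ nn a) ∧ (∑ a, j a = r) ∧ v = Finset.univ.sup j } :=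
  mseq_eq_min_max_general k n nn hsum δ hδ M hM mseq hm r hr1 hrn
end

section
/- Let V = V_1 ⊕ ... ⊕ V_k with dim V_a = n_a and n = Σ n_a. Let 𝔫 ⊂ End(V) be the nilpotent subalgebra of maps sending V_i into ⊕_{j<i} V_j (strictly block lower-triangular with respect to the flag F_i = V_1⊕...⊕V_i). Let m_0 ≤ ... ≤ m_{n-1} be the fundamental degrees of the Levi ⊕_a End(V_a), i.e., the nondecreasing rearrangement of the multiset {1,...,n_1, 1,...,n_2, ..., 1,...,n_k}. Then for any x_1,...,x_j ∈ End(V), the polarized characteristic coefficient c_j(x_1,...,x_j) vanishes whenever at least j+1−m_{j-1} of the x_i belong to 𝔫. -/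
open Matrix

/-- `c_j(A)`: the coefficient of `λ^(card ι - j)` in the characteristic polynomial
`det(λ I - A)` of a matrix `A` indexed by a finite type `ι`. -/
noncomputable def charCoeff' {ι : Type*} [Fintype ι] [DecidableEq ι]
    (j : ℕ) (A : Matrix ι ι ℂ) : ℂ :=
  A.charpoly.coeff (Fintype.card ι - j)

/-- The symmetric multilinear polarization of `c_j`, via the standard polarization
formula, so that `polarization' j (fun _ => A) = c_j(A)`. -/
noncomputable def polarization' {ι : Type*} [Fintype ι] [DecidableEq ι]
    (j : ℕ) (x : Fin j → Matrix ι ι ℂ) : ℂ :=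
  ((Nat.factorial j : ℕ) : ℂ)⁻¹ *
    ∑ S : Finset (Fin j), (-1 : ℂ) ^ (j - S.card) * charCoeff' j (∑ i ∈ S, x i)

/-!
Expanding `c_j(∑_{i ∈ S} x_i)` into principal `j × j` minors, and each minor multilinearly in
its rows, the alternating sum over `S` leaves only the terms in which every `x_i` supplies
exactly one row: up to sign and `1 / j!`, `c_j(x_1, …, x_j)` is the sum, over `j`-subsets `W`
of the basis and bijections `r : W → {1, …, j}`, of the determinant whose row `p` is row `p`
of `x_{r p}`. Some block `V_a` meets `W` in at least `m_{j-1}` indices, since otherwise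
`|W| ≤ ∑_a min(n_a, m_{j-1} - 1) < j`. The rows coming from `𝔫` that lie in blocks `≥ a`
vanish on the columns in blocks `≤ a`, and this zero block has more than `j` rows and columns
in total, so each such determinant vanishes.
-/

open Finset Function

theorem Finset.sum_filter_superset_neg_one_pow_card_compl {α R : Type*} [Fintype α]
    [DecidableEq α] [CommRing R] (T : Finset α) :
    ∑ S with T ⊆ S, (-1 : R) ^ #Sᶜ = if T = univ then 1 else 0 := by
  calc ∑ S with T ⊆ S, (-1 : R) ^ #Sᶜ = ∑ U ∈ Tᶜ.powerset, (-1 : R) ^ #U :=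
        sum_nbij' compl compl (by simp) (by simp [subset_compl_comm])
          (by simp) (by simp) (by simp)
    _ = if T = univ then 1 else 0 := by
        have := congrArg (Int.cast : ℤ → R) (sum_powerset_neg_one_pow_card (x := Tᶜ))
        push_cast at this
        simpa [compl_eq_empty_iff] using this

theorem MultilinearMap.sum_neg_one_pow_card_compl_smul_map_sum {R ι κ M N : Type*} [CommRing R]
    [AddCommMonoid M] [Module R M] [AddCommMonoid N] [Module R N] [Fintype ι] [DecidableEq ι]
    [Fintype κ] [DecidableEq κ] (f : MultilinearMap R (fun _ : ι => M) N) (v : κ → ι → M) :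
    ∑ S : Finset κ, (-1 : R) ^ #Sᶜ • f (fun p => ∑ i ∈ S, v i p) =
      ∑ r : ι → κ with Surjective r, f (fun p => v (r p) p) := by
  simp_rw [f.map_sum_finset, smul_sum]
  rw [sum_comm' (t' := univ) (s' := fun r => {S | univ.image r ⊆ S}) fun S r => by
    simp [image_subset_iff]]
  simp_rw [← sum_smul, sum_filter_superset_neg_one_pow_card_compl]
  rw [sum_filter]
  refine sum_congr rfl fun r _ => ?_
  rw [ite_smul, one_smul, zero_smul]
  exact if_congr (by simp [eq_univ_iff_forall, Surjective]) rfl rfl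

theorem Matrix.sum_neg_one_pow_card_compl_mul_det_sum {R n κ : Type*} [CommRing R] [Fintype n]
    [DecidableEq n] [Fintype κ] [DecidableEq κ] (x : κ → Matrix n n R) :
    ∑ S : Finset κ, (-1 : R) ^ #Sᶜ * (∑ i ∈ S, x i).det =
      ∑ r : n → κ with Surjective r, (of fun p q => x (r p) p q).det := by
  convert (detRowAlternating (R := R) (n := n)).toMultilinearMap
    |>.sum_neg_one_pow_card_compl_smul_map_sum x using 4 with S
  · rw [smul_eq_mul]
    congr
    ext p q
    simp [sum_apply]
  · rfl

theorem Matrix.submatrix_sum {α l m n o : Type*} [AddCommMonoid α] (S : Finset o)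
    (x : o → Matrix m n α) (e : l → m) (f : l → n) :
    (∑ i ∈ S, x i).submatrix e f = ∑ i ∈ S, (x i).submatrix e f := by
  ext
  simp [sum_apply]

-- `charCoeff' j` reads off the coefficient of `X ^ (card ι - j)` with truncated subtraction, so
-- for `j > card ι` it is the signed determinant: hence the `min`.
theorem charCoeff'_eq_sum_minors {ι : Type*} [Fintype ι] [DecidableEq ι] (j : ℕ)
    (A : Matrix ι ι ℂ) :
    charCoeff' j A = (-1) ^ min (Fintype.card ι) j *
      ∑ s ∈ powersetCard (min (Fintype.card ι) j) univ,
        (A.submatrix (Subtype.val : s → ι) Subtype.val).det := by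
  rw [← Nat.sub_sub_eq_min, ← charpoly_coeff_eq_sum_minors A _ (Nat.sub_le _ _),
    Nat.sub_sub_self (Nat.sub_le _ _), charCoeff']

theorem polarization'_eq_sum_det_of_surjective {ι : Type*} [Fintype ι] [DecidableEq ι] (j : ℕ)
    (x : Fin j → Matrix ι ι ℂ) :
    polarization' j x = (j.factorial : ℂ)⁻¹ * ((-1) ^ min (Fintype.card ι) j *
      ∑ s ∈ powersetCard (min (Fintype.card ι) j) univ,
        ∑ r : s → Fin j with Surjective r, (of fun p q : s => x (r p) p.1 q.1).det) := by
  have hcompl (S : Finset (Fin j)) : j - #S = #Sᶜ := by rw [card_compl, Fintype.card_fin]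
  have hminor (s : Finset ι) : ∑ S : Finset (Fin j), (-1 : ℂ) ^ #Sᶜ *
      ((∑ i ∈ S, x i).submatrix (Subtype.val : s → ι) Subtype.val).det =
      ∑ r : s → Fin j with Surjective r, (of fun p q : s => x (r p) p.1 q.1).det := by
    simp_rw [submatrix_sum]
    exact sum_neg_one_pow_card_compl_mul_det_sum _
  simp_rw [polarization', charCoeff'_eq_sum_minors, hcompl, ← hminor, mul_sum]
  rw [sum_comm]
  simp_rw [mul_left_comm]

-- One direction of the Frobenius–König theorem: every permutation maps some `q ∈ Q` into `P`.
theorem Matrix.det_eq_zero_of_card_lt_of_forall_eq_zero {R n : Type*} [CommRing R] [Fintype n]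
    [DecidableEq n] (M : Matrix n n R) {P Q : Finset n} (hPQ : Fintype.card n < #P + #Q)
    (h : ∀ p ∈ P, ∀ q ∈ Q, M p q = 0) : M.det = 0 := by
  refine (det_apply M).trans (sum_eq_zero fun σ _ => ?_)
  obtain ⟨p, hp⟩ := inter_nonempty_of_card_lt_card_add_card (subset_univ P)
    (subset_univ (Q.map σ.toEmbedding)) (by simpa using hPQ)
  rw [mem_inter, mem_map] at hp
  obtain ⟨hpP, q, hq, rfl⟩ := hp
  rw [Equiv.toEmbedding_apply] at hpP
  exact smul_eq_zero_of_right _ (prod_eq_zero (mem_univ q) (h _ hpP q hq))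

theorem Matrix.det_eq_zero_of_card_lt_of_apply_eq_zero_of_not_lt {R n α : Type*} [CommRing R]
    [Fintype n] [DecidableEq n] [LinearOrder α] (M : Matrix n n R) (b : n → α) (T : Finset n)
    (a : α) (hT : ∀ p ∈ T, ∀ q, ¬ b p < b q → M p q = 0)
    (hcard : Fintype.card n < #T + #{p | b p = a}) : M.det = 0 := by
  refine M.det_eq_zero_of_card_lt_of_forall_eq_zero (P := {p ∈ T | a ≤ b p})
    (Q := {q | b q ≤ a}) ?_ fun p hp q hq =>
      hT p (mem_filter.1 hp).1 q ((mem_filter.1 hq).2.trans (mem_filter.1 hp).2).not_gt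
  have hT_split : #T ≤ #{p ∈ T | a ≤ b p} + #{p | b p < a} := by
    rw [← card_filter_add_card_filter_not (fun p => a ≤ b p)]
    gcongr
    intro p
    simp
  have hle_split : #{q | b q ≤ a} = #{q | b q < a} + #{q | b q = a} := by
    rw [← card_union_of_disjoint (disjoint_filter.2 fun q _ h => h.ne), ← filter_or]
    simp_rw [le_iff_lt_or_eq]
  omega

def leviDegrees {κ : Type*} [Fintype κ] (nn : κ → ℕ) : Multiset ℕ :=
  Finset.univ.val.bind fun a => Multiset.map (· + 1) (Multiset.range (nn a))

theorem countP_le_leviDegrees_eq_sum_min {κ : Type*} [Fintype κ] (nn : κ → ℕ) (t : ℕ) :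
    (leviDegrees nn).countP (· ≤ t) = ∑ a, min (nn a) t := by
  rw [leviDegrees, Multiset.countP_eq_card_filter, Multiset.filter_bind, Multiset.card_bind,
    sum_eq_multiset_sum]
  congr 1
  refine Multiset.map_congr rfl fun a _ => ?_
  have : {i ∈ range (nn a) | i < t} = range (min (nn a) t) := by
    ext; simp
  simpa [Multiset.filter_map, ← range_val, ← filter_val] using congrArg card this

theorem List.Pairwise.countP_le_le_of_lt_getElem {α : Type*} [LinearOrder α] {l : List α}
    (hl : l.Pairwise (· ≤ ·)) {i : ℕ} (hi : i < l.length) {t : α} (ht : t < l[i]) :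
    l.countP (· ≤ t) ≤ i := by
  have hdrop : (l.drop i).countP (· ≤ t) = 0 := by
    have hsorted : (l[i] :: l.drop (i + 1)).Pairwise (· ≤ ·) :=
      List.drop_eq_getElem_cons hi ▸ hl.drop
    rw [List.countP_eq_zero, List.drop_eq_getElem_cons hi]
    rintro y (_ | ⟨_, hy⟩)
    · simpa using ht
    · simpa using ht.trans_le (List.rel_of_pairwise_cons hsorted hy)
  calc l.countP (· ≤ t) = (l.take i).countP (· ≤ t) + (l.drop i).countP (· ≤ t) := by
        rw [← List.countP_append, List.take_append_drop]
    _ ≤ i := by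
        rw [hdrop, add_zero]
        exact List.countP_le_length.trans (List.length_take_le _ _)

theorem card_filter_fst_eq_le {κ : Type*} [Fintype κ] [DecidableEq κ] {nn : κ → ℕ}
    (W : Finset (Σ a, Fin (nn a))) (a : κ) : #{y ∈ W | y.1 = a} ≤ nn a :=
  calc #{y ∈ W | y.1 = a} ≤ #{y : Σ a, Fin (nn a) | y.1 = a} :=
        card_le_card (filter_subset_filter _ (subset_univ W))
    _ = nn a := by
        rw [← Fintype.card_subtype, Fintype.card_congr (Equiv.sigmaSubtype a), Fintype.card_fin]

theorem exists_getD_sort_leviDegrees_le_card_filter {κ : Type*} [Fintype κ] [DecidableEq κ]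
    (nn : κ → ℕ) {W : Finset (Σ a, Fin (nn a))} (hW : W.Nonempty) :
    ∃ a, ((leviDegrees nn).sort (· ≤ ·)).getD (#W - 1) 0 ≤ #{y ∈ W | y.1 = a} := by
  set m := (leviDegrees nn).sort (· ≤ ·)
  by_contra! hlt
  obtain ⟨y, hy⟩ := hW
  have hi : #W - 1 < m.length := by
    by_contra! h
    have := hlt y.1
    rw [List.getD_eq_default _ _ h] at this
    omega
  rw [List.getD_eq_getElem _ _ hi] at hlt
  have hpos : 0 < m[#W - 1] := (Nat.zero_le _).trans_lt (hlt y.1)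
  have : #W ≤ #W - 1 := calc
    #W = ∑ a, #{y ∈ W | y.1 = a} := card_eq_sum_card_fiberwise fun y _ => mem_univ y.1
    _ ≤ ∑ a, min (nn a) (m[#W - 1] - 1) := sum_le_sum fun a _ =>
        le_min (card_filter_fst_eq_le W a) (Nat.le_sub_one_of_lt (hlt a))
    _ = m.countP (· ≤ m[#W - 1] - 1) := by
        rw [← countP_le_leviDegrees_eq_sum_min, ← Multiset.sort_eq (leviDegrees nn) (· ≤ ·),
          Multiset.coe_countP]
    _ ≤ #W - 1 :=
        (Multiset.pairwise_sort _ _).countP_le_le_of_lt_getElem hi (Nat.sub_one_lt hpos.ne')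
  have := card_pos.2 ⟨y, hy⟩
  omega

theorem det_of_surjective_rows_eq_zero {R κ : Type*} [CommRing R] [Fintype κ] [LinearOrder κ]
    {nn : κ → ℕ} {j : ℕ} (hj : 1 ≤ j)
    (x : Fin j → Matrix (Σ a, Fin (nn a)) (Σ a, Fin (nn a)) R)
    (T : Finset (Fin j))
    (hT : ∀ i ∈ T, ∀ p q : Σ a, Fin (nn a), ¬ p.1 < q.1 → x i p q = 0)
    (hcard : j < ((leviDegrees nn).sort (· ≤ ·)).getD (j - 1) 0 + #T)
    {s : Finset (Σ a, Fin (nn a))} (hs : #s ≤ j) {r : s → Fin j} (hr : Surjective r) :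
    (of fun p q : s => x (r p) p.1 q.1).det = 0 := by
  have hsj : #s = j := le_antisymm hs (by simpa using Fintype.card_le_of_surjective r hr)
  have hbij : Bijective r := (Fintype.bijective_iff_surjective_and_card r).2 ⟨hr, by simp [hsj]⟩
  obtain ⟨a, ha⟩ := exists_getD_sort_leviDegrees_le_card_filter nn (card_pos.1 (hsj ▸ hj))
  rw [hsj] at ha
  refine det_eq_zero_of_card_lt_of_apply_eq_zero_of_not_lt _ (fun p => p.1.1) {p | r p ∈ T} a
    (fun p hp q hq => hT (r p) (mem_filter.1 hp).2 p q hq) ?_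
  have hT' : #{p | r p ∈ T} = #T := card_bijective r hbij (by simp)
  have ha' : #{p : s | p.1.1 = a} = #{y ∈ s | y.1 = a} :=
    card_nbij Subtype.val (fun p hp => mem_filter.2 ⟨p.2, (mem_filter.1 hp).2⟩)
      Subtype.val_injective.injOn (fun y hy => by simp_all)
  rw [Fintype.card_coe, hT', ha']
  omega

theorem polarization_eq_zero_of_nilpotent_general (k : ℕ) (nn : Fin k → ℕ)
    (m : List ℕ)
    (hm : m = Multiset.sort
      (Finset.univ.val.bind fun a : Fin k => Multiset.map (· + 1) (Multiset.range (nn a))) (· ≤ ·))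
    (j : ℕ) (hj : 1 ≤ j)
    (x : Fin j → Matrix ((a : Fin k) × Fin (nn a)) ((a : Fin k) × Fin (nn a)) ℂ)
    (T : Finset (Fin j))
    (hT : ∀ i ∈ T, ∀ p q : (a : Fin k) × Fin (nn a), ¬ p.1 < q.1 → x i p q = 0)
    (hcard : j + 1 - m.getD (j - 1) 0 ≤ T.card) :
    polarization' j x = 0 := by
  have hcard' : j < ((leviDegrees nn).sort (· ≤ ·)).getD (j - 1) 0 + #T := by
    rw [leviDegrees, ← hm]
    omega
  rw [polarization'_eq_sum_det_of_surjective]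
  refine mul_eq_zero_of_right _ <| mul_eq_zero_of_right _ <|
    sum_eq_zero fun s hs => sum_eq_zero fun r hr => ?_
  exact det_of_surjective_rows_eq_zero hj x T hT hcard'
    ((mem_powersetCard.1 hs).2.trans_le (min_le_right _ _)) (mem_filter.1 hr).2

/-- Let `V = V_1 ⊕ ... ⊕ V_k` with `dim V_a = n_a`, with basis indexed by the sigma type
`(a : Fin k) × Fin (n a)`, `𝔫` the strictly block-lower-triangular nilpotent algebra
(entries `x p q` nonzero only for `p.1 < q.1`), and `m_0 ≤ ... ≤ m_{n-1}` the nondecreasing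
rearrangement of the fundamental degrees `{1,...,n_1} ∪ ... ∪ {1,...,n_k}` of the Levi.
Then the polarized characteristic coefficient `c_j(x_1,...,x_j)` vanishes whenever at
least `j + 1 - m_{j-1}` of the `x_i` belong to `𝔫`. -/
theorem polarization_eq_zero_of_nilpotent (k : ℕ) (nn : Fin k → ℕ) (hn : ∀ a, 0 < nn a)
    (m : List ℕ)
    (hm : m = Multiset.sort
      (Finset.univ.val.bind fun a : Fin k => Multiset.map (· + 1) (Multiset.range (nn a))) (· ≤ ·))
    (j : ℕ) (hj : 1 ≤ j) (hjn : j ≤ Fintype.card ((a : Fin k) × Fin (nn a)))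
    (x : Fin j → Matrix ((a : Fin k) × Fin (nn a)) ((a : Fin k) × Fin (nn a)) ℂ)
    (T : Finset (Fin j))
    (hT : ∀ i ∈ T, ∀ p q : (a : Fin k) × Fin (nn a), ¬ p.1 < q.1 → x i p q = 0)
    (hcard : j + 1 - m.getD (j - 1) 0 ≤ T.card) :
    polarization' j x = 0 :=
  polarization_eq_zero_of_nilpotent_general k nn m hm j hj x T hT hcard
end

section
/- Let 𝒪 = ℂ[[t]], and let V = ℂ^n with a flag of subspaces of dimensions determined by a partition n = n_1 + ... + n_k, with parabolic 𝔭 ⊂ gl_n stabilizing the flag and nilpotent radical 𝔫. Let m_0 ≤ m_1 ≤ ... ≤ m_{n-1} be the nondecreasing rearrangement of {1,...,n_1,...,1,...,n_k}. Then for every A ∈ 𝔫 + t·gl_n(𝒪), the j-th characteristic coefficient c_j(A) lies in t^{m_{j-1}}𝒪 for all 1 ≤ j ≤ n. -/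
open Matrix PowerSeries

/-!
By `Matrix.charpoly_coeff_eq_sum_minors`, `c_j(A)` is up to sign the sum of the principal
`j × j` minors of `A`, and each Leibniz term of the minor on an index set `s` is a product
`∏ A (τ i) i` over a permutation `τ` of `s`. The factor `A (τ i) i` is divisible by `t` as soon
as the block of `i` is at most the block of `τ i`; call such `i` a non-descent, and let `N` be
their number. Along any orbit of `τ` the block index must climb back up between two visits of
the same block, so every block meets `s` in at most `min N n_a` points. Hence
`j ≤ ∑ a, min N n_a`, which is the number of entries `≤ N` in the multiset
`{1, …, n_1, …, 1, …, n_k}`, so `m_{j-1} ≤ N`.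
-/

open Finset Equiv

theorem List.Pairwise.getD_le_of_lt_countP {α : Type*} [LinearOrder α] {l : List α}
    (hl : l.Pairwise (· ≤ ·)) {i : ℕ} {N : α} (d : α) (h : i < l.countP (· ≤ N)) :
    l.getD i d ≤ N := by
  have hi : i < l.length := h.trans_le List.countP_le_length
  rw [List.getD_eq_getElem _ _ hi]
  by_contra! hN
  have hdrop : (l.drop i).countP (· ≤ N) = 0 := by
    have hsorted := hl.drop (i := i)
    rw [List.drop_eq_getElem_cons hi, List.pairwise_cons] at hsorted
    rw [List.countP_eq_zero, List.drop_eq_getElem_cons hi]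
    rintro x (_ | ⟨_, hx⟩)
    · simpa using hN
    · simpa using hN.trans_le (hsorted.1 x hx)
  have htake : (l.take i).countP (· ≤ N) ≤ i :=
    List.countP_le_length.trans (List.length_take_le i l)
  rw [← List.take_append_drop i l, List.countP_append, hdrop] at h
  omega

theorem Multiset.countP_bind {α β : Type*} (s : Multiset α) (f : α → Multiset β) (p : β → Prop)
    [DecidablePred p] : (s.bind f).countP p = (s.map fun a => (f a).countP p).sum := by
  simp [Multiset.countP_eq_card_filter, Multiset.filter_bind, Multiset.card_bind]

theorem Multiset.countP_le_map_succ_range (n N : ℕ) :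
    (Multiset.map (· + 1) (Multiset.range n)).countP (· ≤ N) = min N n := by
  have : (Finset.range n).filter (fun a => a + 1 ≤ N) = Finset.range (min N n) := by
    ext; simp only [Finset.mem_filter, Finset.mem_range]; omega
  rw [Multiset.countP_map, ← Finset.range_val, ← Finset.filter_val, Finset.card_val, this,
    Finset.card_range]

theorem Finset.card_filter_sigma_fst_eq {α : Type*} {β : α → Type*} [Fintype α] [DecidableEq α]
    [∀ a, Fintype (β a)] (a : α) : #{p : Sigma β | p.1 = a} = Fintype.card (β a) := by
  rw [← Fintype.card_subtype, Fintype.card_congr (Equiv.sigmaSubtype a)]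

theorem Finset.pow_card_filter_dvd_prod {ι M : Type*} [CommMonoid M] (s : Finset ι)
    (p : ι → Prop) [DecidablePred p] {f : ι → M} {c : M} (h : ∀ i ∈ s, p i → c ∣ f i) :
    c ^ #{i ∈ s | p i} ∣ ∏ i ∈ s, f i := by
  rw [← prod_filter_mul_prod_filter_not s p, ← prod_const]
  refine dvd_mul_of_dvd_left (prod_dvd_prod_of_dvd _ _ fun i hi => ?_) _
  exact h i (mem_filter.1 hi).1 (mem_filter.1 hi).2

namespace Equiv.Perm

variable {κ α : Type*} [Fintype κ] [LinearOrder α]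

/- Send a point of level `a` to the first point of its forward orbit where `b` does not
decrease; `b` strictly decreases before that, so no other point of level `a` is passed. -/
theorem card_filter_eq_le_card_filter_le_apply [WellFoundedLT α] (τ : Perm κ) (b : κ → α)
    (a : α) : #{i | b i = a} ≤ #{i | b i ≤ b (τ i)} := by
  classical
  have hrise (x : κ) : ∃ n, ¬ b ((τ ^ (n + 1)) x) < b ((τ ^ n) x) :=
    WellFounded.not_rel_apply_succ fun n => b ((τ ^ n) x)
  let rise x := Nat.find (hrise x)
  have hanti (x : κ) : StrictAntiOn (fun n => b ((τ ^ n) x)) (Set.Iic (rise x)) :=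
    strictAntiOn_Iic_of_succ_lt fun n hn => by
      simpa using Nat.find_min (hrise x) hn
  refine card_le_card_of_injOn (fun x => (τ ^ rise x) x) (fun x _ => ?_) ?_
  · have := Nat.find_spec (hrise x)
    rw [not_lt, pow_succ', Perm.mul_apply] at this
    simpa [rise] using this
  intro x hx x' hx' h
  wlog hle : rise x ≤ rise x' generalizing x x'
  · exact (this hx' hx h.symm (le_of_not_ge hle)).symm
  have hx_eq : x = (τ ^ (rise x' - rise x)) x' := by
    apply (τ ^ rise x).injective
    rw [← Perm.mul_apply, ← pow_add, Nat.add_sub_cancel' hle]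
    exact h
  rcases Nat.eq_zero_or_pos (rise x' - rise x) with hd | hd
  · simpa [hd] using hx_eq
  · have := hanti x' (Set.mem_Iic.2 (Nat.zero_le _)) (Set.mem_Iic.2 (Nat.sub_le _ _)) hd
    simp only [coe_filter, Set.mem_ofPred_eq] at hx hx'
    simp [← hx_eq, hx, hx'] at this

theorem card_le_sum_min_card_filter_le_apply [WellFoundedLT α] [Fintype α]
    (τ : Perm κ) (b : κ → α) {cap : α → ℕ} (hcap : ∀ a, #{i | b i = a} ≤ cap a) :
    Fintype.card κ ≤ ∑ a, min #{i | b i ≤ b (τ i)} (cap a) := by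
  rw [← card_univ, card_eq_sum_card_fiberwise (f := b) (t := univ) fun _ _ => mem_univ _]
  exact sum_le_sum fun a _ => le_min (τ.card_filter_eq_le_card_filter_le_apply b a) (hcap a)

end Equiv.Perm

theorem Matrix.dvd_charpoly_coeff_of_forall_dvd_prod {ι R : Type*} [CommRing R] [Fintype ι]
    [DecidableEq ι] (A : Matrix ι ι R) {c : R} {j : ℕ} (hj : j ≤ Fintype.card ι)
    (h : ∀ s : Finset ι, #s = j → ∀ τ : Perm s, c ∣ ∏ i, A (τ i) i) :
    c ∣ A.charpoly.coeff (Fintype.card ι - j) := by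
  rw [charpoly_coeff_eq_sum_minors A j hj]
  refine dvd_mul_of_dvd_right (dvd_sum fun s hs => ?_) _
  rw [det_apply']
  exact dvd_sum fun τ _ => dvd_mul_of_dvd_right (h s (mem_powersetCard.1 hs).2 τ) _

theorem charCoeff_dvd_of_parabolic_general (k : ℕ) (nn : Fin k → ℕ)
    (m : List ℕ)
    (hm : m = Multiset.sort
      (Finset.univ.val.bind fun a : Fin k => Multiset.map (· + 1) (Multiset.range (nn a))) (· ≤ ·))
    (y : Matrix ((a : Fin k) × Fin (nn a)) ((a : Fin k) × Fin (nn a)) ℂ)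
    (hy : ∀ p q : (a : Fin k) × Fin (nn a), ¬ p.1 < q.1 → y p q = 0)
    (z : Matrix ((a : Fin k) × Fin (nn a)) ((a : Fin k) × Fin (nn a)) (PowerSeries ℂ))
    (A : Matrix ((a : Fin k) × Fin (nn a)) ((a : Fin k) × Fin (nn a)) (PowerSeries ℂ))
    (hA : A = y.map (PowerSeries.C (R := ℂ)) + (PowerSeries.X : PowerSeries ℂ) • z)
    (j : ℕ) (hj : 1 ≤ j) (hjn : j ≤ Fintype.card ((a : Fin k) × Fin (nn a))) :
    (PowerSeries.X : PowerSeries ℂ) ^ (m.getD (j - 1) 0) ∣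
      A.charpoly.coeff (Fintype.card ((a : Fin k) × Fin (nn a)) - j) := by
  classical
  have hX (p q) (hpq : ¬ p.1 < q.1) : (X : PowerSeries ℂ) ∣ A p q := by
    rw [hA, Matrix.add_apply, map_apply, hy p q hpq, map_zero, zero_add, Matrix.smul_apply,
      smul_eq_mul]
    exact dvd_mul_right _ _
  refine A.dvd_charpoly_coeff_of_forall_dvd_prod hjn fun s hs τ => ?_
  set N := #{i : s | i.1.1 ≤ (τ i).1.1}
  have hXN : X ^ N ∣ ∏ i, A (τ i) i :=
    pow_card_filter_dvd_prod _ _ fun i _ hi => hX _ _ hi.not_gt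
  refine (pow_dvd_pow X ?_).trans hXN
  have hfiber (a : Fin k) : #{i : s | i.1.1 = a} ≤ nn a := by
    have := card_le_card_of_injOn Subtype.val (s := {i : s | i.1.1 = a})
      (t := {p : (b : Fin k) × Fin (nn b) | p.1 = a}) (fun _ hi => by simpa using hi)
      Subtype.val_injective.injOn
    simpa [card_filter_sigma_fst_eq] using this
  have hcount := τ.card_le_sum_min_card_filter_le_apply (fun i => i.1.1) hfiber
  rw [Fintype.card_coe, hs] at hcount
  subst hm
  refine (Multiset.pairwise_sort _ _).getD_le_of_lt_countP 0 ?_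
  rw [← Multiset.coe_countP, Multiset.sort_eq, Multiset.countP_bind]
  simp only [Multiset.countP_le_map_succ_range]
  exact (Nat.sub_one_lt_of_le hj le_rfl).trans_le hcount

/-- Let `𝒪 = ℂ[[t]]` and let `𝔫 ⊂ gl_n` be the strictly block-lower-triangular nilpotent
radical for the block decomposition of `ℂ^n` of sizes `n_1, ..., n_k` (basis indexed by the
sigma type `(a : Fin k) × Fin (n a)`), and let `m_0 ≤ ... ≤ m_{n-1}` be the nondecreasing
rearrangement of `{1,...,n_1} ∪ ... ∪ {1,...,n_k}`. Then for every `A = y + t·z` with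
`y ∈ 𝔫` a constant matrix and `z ∈ gl_n(𝒪)`, the `j`-th characteristic coefficient
`c_j(A)` (the coefficient of `λ^{n-j}` in `det(λI - A)`) lies in `t^{m_{j-1}} 𝒪`
for all `1 ≤ j ≤ n`. -/
theorem charCoeff_dvd_of_parabolic (k : ℕ) (nn : Fin k → ℕ) (hn : ∀ a, 0 < nn a)
    (m : List ℕ)
    (hm : m = Multiset.sort
      (Finset.univ.val.bind fun a : Fin k => Multiset.map (· + 1) (Multiset.range (nn a))) (· ≤ ·))
    (y : Matrix ((a : Fin k) × Fin (nn a)) ((a : Fin k) × Fin (nn a)) ℂ)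
    (hy : ∀ p q : (a : Fin k) × Fin (nn a), ¬ p.1 < q.1 → y p q = 0)
    (z : Matrix ((a : Fin k) × Fin (nn a)) ((a : Fin k) × Fin (nn a)) (PowerSeries ℂ))
    (A : Matrix ((a : Fin k) × Fin (nn a)) ((a : Fin k) × Fin (nn a)) (PowerSeries ℂ))
    (hA : A = y.map (PowerSeries.C (R := ℂ)) + (PowerSeries.X : PowerSeries ℂ) • z)
    (j : ℕ) (hj : 1 ≤ j) (hjn : j ≤ Fintype.card ((a : Fin k) × Fin (nn a))) :
    (PowerSeries.X : PowerSeries ℂ) ^ (m.getD (j - 1) 0) ∣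
      A.charpoly.coeff (Fintype.card ((a : Fin k) × Fin (nn a)) - j) :=
  charCoeff_dvd_of_parabolic_general k nn m hm y hy z A hA j hj hjn
end

section
/- Let 𝒪 = ℂ[[t]] and fix a partition n = n_1+...+n_k with associated sequence m_0 ≤ ... ≤ m_{n-1} (nondecreasing rearrangement of {1,...,n_1, ..., 1,...,n_k}). For arbitrary f_0, f_1, ..., f_{n-1} ∈ 𝒪, let ε_1,...,ε_{n-1} ∈ {0,1} be defined so that ε_1+...+ε_j = j+1−m_j for all j, and let A be the companion-type matrix with first row (−f_0, −f_1, ..., −f_{n-1}) and subdiagonal entries t^{−ε_1}, ..., t^{−ε_{n-1}}, all other entries zero. Then for each j with 1 ≤ j ≤ n, the characteristic coefficient satisfies c_j(tA) = t^{m_{j-1}} f_{j-1}. -/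
/-!
Expanding `det (X - M)` along the last column shows that a matrix `M` whose only nonzero
entries are a first row `b` and a subdiagonal `d` has characteristic polynomial
`X ^ n - ∑ j, b j * d 1 ⋯ d j * X ^ (n - 1 - j)`. For `M = t • A` the subdiagonal entries are
`t ^ (1 - ε l)`, so `c_j(tA) = t ^ (1 + ∑_{l < j} (1 - ε l)) * f_{j-1}`, and the defining relation
of `ε` (together with `m_0 = 1`, the smallest part) turns this exponent into `m_{j-1}`.
-/

open Matrix Polynomial Finset

namespace Matrix

variable {R : Type*} [CommRing R]

def companionType {n : ℕ} (b : Fin n → R) (d : ℕ → R) : Matrix (Fin n) (Fin n) R :=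
  of fun i j => if (i : ℕ) = 0 then b j else if (i : ℕ) = j + 1 then d (j + 1) else 0

theorem smul_companionType {n : ℕ} (c : R) (b : Fin n → R) (d : ℕ → R) :
    c • companionType b d = companionType (c • b) (c • d) := by
  ext i j
  simp only [companionType, smul_apply, of_apply]
  split_ifs <;> simp

theorem companionType_submatrix_castSucc {n : ℕ} (b : Fin (n + 1) → R) (d : ℕ → R) :
    (companionType b d).submatrix Fin.castSucc Fin.castSucc =
      companionType (b ∘ Fin.castSucc) d := by
  ext i j
  simp [companionType, -Fin.val_eq_zero_iff]

theorem charmatrix_submatrix {m n : Type*} [DecidableEq m] [Fintype m] [DecidableEq n]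
    [Fintype n] (M : Matrix n n R) {e : m → n} (he : Function.Injective e) :
    (charmatrix M).submatrix e e = charmatrix (M.submatrix e e) := by
  ext i j
  rcases eq_or_ne i j with rfl | hij
  · simp
  · simp [charmatrix_apply_ne _ _ _ hij, charmatrix_apply_ne _ _ _ (he.ne hij)]

theorem charmatrix_companionType_last_of_ne {n : ℕ} (b : Fin (n + 1) → R) (d : ℕ → R)
    {i : Fin (n + 1)} (h0 : i ≠ 0) (hlast : i ≠ Fin.last n) :
    charmatrix (companionType b d) i (Fin.last n) = 0 := by
  rw [charmatrix_apply_ne _ _ _ hlast]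
  have hi : (i : ℕ) ≠ n + 1 := by omega
  simp [companionType, h0, hi]

theorem det_charmatrix_companionType_submatrix_succ_castSucc {n : ℕ} (b : Fin (n + 1) → R)
    (d : ℕ → R) :
    ((charmatrix (companionType b d)).submatrix Fin.succ Fin.castSucc).det =
      (-1) ^ n * C (∏ l ∈ Icc 1 n, d l) := by
  rw [det_of_isUpperTriangular]
  · have hdiag : ∀ i : Fin n, charmatrix (companionType b d) i.succ i.castSucc =
        -C (d (i + 1)) := fun i => by
      rw [charmatrix_apply_ne _ _ _ (Fin.castSucc_lt_succ (i := i)).ne']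
      simp [companionType]
    simp only [submatrix_apply, hdiag, prod_neg, card_univ, Fintype.card_fin, ← map_prod]
    rw [Fin.prod_univ_eq_prod_range (fun i => d (i + 1)), ← Ico_add_one_right_eq_Icc,
      prod_Ico_eq_prod_range]
    simp [add_comm]
  · intro i j hji
    have hji : (j : ℕ) < i := hji
    rw [submatrix_apply, charmatrix_apply_ne _ _ _ (by simp [Fin.ext_iff]; omega)]
    simp [companionType, hji.ne']

theorem charpoly_companionType_succ {n : ℕ} (b : Fin (n + 1 + 1) → R) (d : ℕ → R) :
    (companionType b d).charpoly =
      X * (companionType (b ∘ Fin.castSucc) d).charpoly -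
        C (b (Fin.last (n + 1)) * ∏ l ∈ Icc 1 (n + 1), d l) := by
  have h0 : (0 : Fin (n + 1 + 1)) ≠ Fin.last (n + 1) := Fin.last_pos.ne
  have hfirst : (-1) ^ (n + 1) * charmatrix (companionType b d) 0 (Fin.last (n + 1)) *
      ((charmatrix (companionType b d)).submatrix Fin.succ Fin.castSucc).det =
        -C (b (Fin.last (n + 1)) * ∏ l ∈ Icc 1 (n + 1), d l) := by
    rw [det_charmatrix_companionType_submatrix_succ_castSucc, charmatrix_apply_ne _ _ _ h0]
    simp only [companionType, of_apply, Fin.val_zero, if_true, map_mul]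
    have hsign : ((-1 : R[X]) ^ (n + 1)) * (-1) ^ (n + 1) = 1 := by
      rw [← pow_add, Even.neg_one_pow ⟨n + 1, rfl⟩]
    linear_combination (-(C (b (Fin.last (n + 1))) * C (∏ l ∈ Icc 1 (n + 1), d l))) * hsign
  have hlast : charmatrix (companionType b d) (Fin.last (n + 1)) (Fin.last (n + 1)) = X := by
    simp [companionType]
  rw [charpoly, det_succ_column _ (Fin.last _),
    Fintype.sum_eq_add 0 (Fin.last _) h0 fun i hi => by
      rw [charmatrix_companionType_last_of_ne b d hi.1 hi.2, mul_zero, zero_mul],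
    Fin.succAbove_zero, Fin.succAbove_last, Fin.val_zero, Fin.val_last, zero_add, hfirst,
    hlast, Even.neg_one_pow ⟨n + 1, rfl⟩, one_mul,
    charmatrix_submatrix _ (Fin.castSucc_injective _), companionType_submatrix_castSucc,
    ← charpoly]
  ring

theorem charpoly_companionType : ∀ {n : ℕ} (b : Fin n → R) (d : ℕ → R),
    (companionType b d).charpoly =
      X ^ n - ∑ j : Fin n, C (b j * ∏ l ∈ Icc 1 (j : ℕ), d l) * X ^ (n - 1 - j)
  | 0, _, _ => by simp [charpoly]
  | 1, b, d => by simp [charpoly, companionType]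
  | n + 2, b, d => by
    have hshift (j : Fin (n + 1)) :
        X * X ^ (n + 1 - 1 - j : ℕ) = (X ^ (n + 2 - 1 - j) : R[X]) := by
      rw [← pow_succ']; congr 1; omega
    rw [charpoly_companionType_succ, charpoly_companionType, Fin.sum_univ_castSucc (n := n + 1)]
    simp only [Function.comp_apply, Fin.val_castSucc, Fin.val_last, mul_sub, mul_sum,
      mul_left_comm X, hshift, show n + 2 - 1 - (n + 1) = 0 by omega, pow_zero, mul_one]
    ring

theorem coeff_charpoly_companionType {n : ℕ} (b : Fin n → R) (d : ℕ → R) (j : Fin n) :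
    (companionType b d).charpoly.coeff (n - (j + 1)) = -(b j * ∏ l ∈ Icc 1 (j : ℕ), d l) := by
  have hj := j.isLt
  rw [charpoly_companionType, coeff_sub, coeff_X_pow, if_neg (by omega), finsetSum_coeff,
    Fintype.sum_eq_single j fun i hi => by
      rw [coeff_C_mul_X_pow, if_neg (by omega)],
    show n - (j + 1) = n - 1 - j by omega, coeff_C_mul_X_pow, if_pos rfl, zero_sub]

end Matrix

theorem HahnSeries.prod_single {ι Γ R : Type*} [AddCommMonoid Γ] [PartialOrder Γ]
    [IsOrderedCancelAddMonoid Γ] [CommSemiring R] (s : Finset ι) (g : ι → Γ) (r : ι → R) :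
    ∏ i ∈ s, HahnSeries.single (g i) (r i) =
      HahnSeries.single (∑ i ∈ s, g i) (∏ i ∈ s, r i) := by
  classical
  induction s using Finset.induction with
  | empty => rfl
  | insert i s hi ih => rw [prod_insert hi, ih, HahnSeries.single_mul_single, sum_insert hi,
      prod_insert hi]

theorem List.Pairwise.getD_zero_eq_of_forall_le {α : Type*} [PartialOrder α] {l : List α}
    (hl : l.Pairwise (· ≤ ·)) {a : α} (ha : a ∈ l) (hmin : ∀ x ∈ l, a ≤ x) (d : α) :
    l.getD 0 d = a := by
  cases l with
  | nil => simp at ha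
  | cons x l =>
    rcases List.mem_cons.mp ha with rfl | ha
    · rfl
    · exact le_antisymm (List.rel_of_pairwise_cons hl ha) (hmin x List.mem_cons_self)

theorem getD_zero_sort_bind_map_succ_range {k : ℕ} (nn : Fin k → ℕ) {a : Fin k}
    (ha : nn a ≠ 0) :
    (Multiset.sort (Finset.univ.val.bind fun a : Fin k =>
      Multiset.map (· + 1) (Multiset.range (nn a))) (· ≤ ·)).getD 0 0 = 1 :=
  (Multiset.pairwise_sort _ _).getD_zero_eq_of_forall_le
    (by simpa [Multiset.mem_sort] using ⟨a, Nat.pos_of_ne_zero ha⟩)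
    (by simp [Multiset.mem_sort]; omega) 0

/-- Companion matrix computation over `𝒦 = ℂ((t))` (Laurent series). Fix a partition
`n = n_1 + ... + n_k` with associated nondecreasing sequence `m_0 ≤ ... ≤ m_{n-1}`
(rearrangement of `{1,...,n_1} ∪ ... ∪ {1,...,n_k}`). Given `f_0, ..., f_{n-1} ∈ 𝒪 = ℂ[[t]]`
and `ε_1, ..., ε_{n-1} ∈ {0,1}` with `ε_1 + ... + ε_j = j + 1 - m_j`, let `A` be the
companion-type matrix with first row `(-f_0, ..., -f_{n-1})`, subdiagonal entries
`t^{-ε_1}, ..., t^{-ε_{n-1}}`, and zeros elsewhere. Then the `j`-th characteristic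
coefficient (of `λ^{n-j}` in `det(λI - tA)`) satisfies `c_j(tA) = t^{m_{j-1}} f_{j-1}`. -/
theorem companion_charCoeff (k n : ℕ) (nn : Fin k → ℕ)
    (hsum : ∑ a, nn a = n) (hnpos : 1 ≤ n)
    (m : List ℕ)
    (hm : m = Multiset.sort
      (Finset.univ.val.bind fun a : Fin k => Multiset.map (· + 1) (Multiset.range (nn a))) (· ≤ ·))
    (f : Fin n → PowerSeries ℂ)
    (ε : ℕ → ℕ)
    (hε : ∀ i, 1 ≤ i → i ≤ n - 1 →
      ε i ≤ 1 ∧ (∑ l ∈ Finset.Icc 1 i, ε l) + m.getD i 0 = i + 1)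
    (A : Matrix (Fin n) (Fin n) (LaurentSeries ℂ))
    (hA : A = Matrix.of fun i j : Fin n =>
      if (i : ℕ) = 0 then -(HahnSeries.ofPowerSeries ℤ ℂ (f j))
      else if (i : ℕ) = (j : ℕ) + 1 then HahnSeries.single (-(ε ((j : ℕ) + 1)) : ℤ) 1
      else 0) :
    ∀ j, 1 ≤ j → (hjn : j ≤ n) →
      ((HahnSeries.single (1 : ℤ) (1 : ℂ) : LaurentSeries ℂ) • A).charpoly.coeff (n - j) =
        HahnSeries.single ((m.getD (j - 1) 0 : ℤ)) 1 *
          HahnSeries.ofPowerSeries ℤ ℂ (f ⟨j - 1, by omega⟩) := by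
  intro j hj hjn
  obtain ⟨i, rfl⟩ : ∃ i, j = i + 1 := ⟨j - 1, by omega⟩
  have hm0 : m.getD 0 0 = 1 := by
    obtain ⟨a, -, ha⟩ := exists_ne_zero_of_sum_ne_zero (hsum.trans_ne (by omega))
    exact hm ▸ getD_zero_sort_bind_map_succ_range nn ha
  have hexp : 1 + ∑ l ∈ Icc 1 i, (1 - ε l : ℤ) = m.getD i 0 := by
    rcases i.eq_zero_or_pos with rfl | hi
    · simp [hm0, -List.getD_eq_getElem?_getD]
    · have := (hε i hi (by omega)).2
      rw [sum_sub_distrib, sum_const, Nat.card_Icc, ← Nat.cast_sum, nsmul_one]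
      omega
  have hA' : A = companionType (fun j => -HahnSeries.ofPowerSeries ℤ ℂ (f j))
      (fun l => HahnSeries.single (-(ε l : ℤ)) 1) := hA
  rw [hA', smul_companionType, coeff_charpoly_companionType _ _ ⟨i, by omega⟩]
  simp only [Pi.smul_apply, smul_eq_mul, HahnSeries.single_mul_single, HahnSeries.prod_single,
    mul_one, prod_const_one, ← sub_eq_add_neg, Nat.add_sub_cancel, ← hexp]
  rw [mul_right_comm, HahnSeries.single_mul_single, mul_one]
  ring
end

section
/- Let n = r_1 + ... + r_k + s with r = r_1+...+r_k, and let δ_1 ≥ ... ≥ δ_m be the conjugate partition of (r_1,...,r_k). Assume m is even and m ≤ 2s. Then the nondecreasing rearrangement m̃_0 ≤ m̃_1 ≤ ... ≤ m̃_{2n} of the multiset ⋃_j {1,...,r_j} ∪ ⋃_j {1,...,r_j} ∪ {1,...,2s+1} (the Levi fundamental degrees for the partition (r_1,r_1,...,r_k,r_k,2s+1) of 2n+1) is the sequence with value i repeated 2δ_i + 1 times for i = 1,...,m, followed by m+1, m+2, ..., 2s+1; moreover its odd-index subsequence m̃_1, m̃_3, ..., m̃_{2n−1} equals the nondecreasing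 rearrangement of the multiset ⋃_j {1,...,r_j} ∪ {2,4,...,2s}. -/
/-!
Counting multiplicities, a value `v ≥ 1` occurs `2 δ_v + 1` times among the `m̃`'s when
`v ≤ 2s + 1`, and not at all beyond; since `δ_v = 0` for `v > m`, the first claim follows.
Every run of equal values has odd length, so the run of `v` starts at an even index exactly when
`v` is odd. Hence the odd-index entries contain `δ_v` copies of each odd `v` and `δ_v + 1` copies
of each even `v ≤ 2s`, which are the multiplicities of `⋃_j {1..r_j} ∪ {2,4,...,2s}`.
-/

namespace TypeBLevi

section OddEntries

variable {α : Type*}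

def oddEntries : List α → List α
  | [] => []
  | [_] => []
  | _ :: b :: l => b :: oddEntries l

theorem oddEntries_getD (d : α) : ∀ (l : List α) (j : ℕ),
    (oddEntries l).getD j d = l.getD (2 * j + 1) d
  | [], _ => rfl
  | [_], _ => rfl
  | _ :: _ :: _, 0 => rfl
  | _ :: _ :: l, j + 1 => oddEntries_getD d l j

theorem oddEntries_append : ∀ (l₁ l₂ : List α), Even l₁.length →
    oddEntries (l₁ ++ l₂) = oddEntries l₁ ++ oddEntries l₂
  | [], _, _ => rfl
  | [_], _, h => by simp at h
  | a :: b :: l, l₂, h => by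
    have hl : Even l.length := by simpa [parity_simps] using h
    exact congrArg (b :: ·) (oddEntries_append l l₂ hl)

theorem oddEntries_replicate_two_mul (y : α) : ∀ b : ℕ,
    oddEntries (List.replicate (2 * b) y) = List.replicate b y
  | 0 => rfl
  | b + 1 => congrArg (y :: ·) (oddEntries_replicate_two_mul y b)

theorem oddEntries_replicate_append_replicate (x y : α) (a b : ℕ) :
    oddEntries (List.replicate (2 * a + 1) x ++ List.replicate (2 * b + 1) y) =
      List.replicate a x ++ List.replicate (b + 1) y := by
  have hsplit : List.replicate (2 * a + 1) x ++ List.replicate (2 * b + 1) y =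
      List.replicate (2 * a) x ++ (x :: y :: List.replicate (2 * b) y) := by
    rw [List.replicate_succ', List.replicate_succ]
    simp
  rw [hsplit, oddEntries_append _ _ (by simp), oddEntries_replicate_two_mul]
  exact congrArg (List.replicate a x ++ y :: ·) (oddEntries_replicate_two_mul y b)

end OddEntries

section SortedOfCounts

def sortedOfCounts (c : ℕ → ℕ) (N : ℕ) : List ℕ :=
  (List.range N).flatMap fun i => List.replicate (c (i + 1)) (i + 1)

variable (c : ℕ → ℕ)

theorem sortedOfCounts_zero : sortedOfCounts c 0 = [] := rfl

theorem sortedOfCounts_succ (N : ℕ) :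
    sortedOfCounts c (N + 1) = sortedOfCounts c N ++ List.replicate (c (N + 1)) (N + 1) := by
  simp [sortedOfCounts, List.range_succ]

theorem pairwise_le_sortedOfCounts : ∀ N, (sortedOfCounts c N).Pairwise (· ≤ ·)
  | 0 => List.Pairwise.nil
  | N + 1 => by
    rw [sortedOfCounts_succ, List.pairwise_append]
    refine ⟨pairwise_le_sortedOfCounts N, List.pairwise_replicate.2 (Or.inr le_rfl), ?_⟩
    intro x hx y hy
    simp only [sortedOfCounts, List.mem_flatMap, List.mem_range, List.mem_replicate] at hx hy
    omega

theorem count_sortedOfCounts (v : ℕ) : ∀ N,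
    (sortedOfCounts c N).count v = if 1 ≤ v ∧ v ≤ N then c v else 0
  | 0 => by rw [sortedOfCounts_zero, List.count_nil, if_neg (by omega)]
  | N + 1 => by
    rw [sortedOfCounts_succ, List.count_append, count_sortedOfCounts v N, List.count_replicate]
    by_cases hv : v = N + 1
    · subst hv
      simp
    · simp only [beq_iff_eq, Ne.symm hv, if_false]
      split_ifs <;> omega

theorem sort_eq_sortedOfCounts (S : Multiset ℕ) (N : ℕ)
    (hS : ∀ v, S.count v = if 1 ≤ v ∧ v ≤ N then c v else 0) :
    S.sort (· ≤ ·) = sortedOfCounts c N := by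
  refine List.Perm.eq_of_pairwise' (Multiset.pairwise_sort _ _)
    (pairwise_le_sortedOfCounts c N) (Multiset.coe_eq_coe.1 ?_)
  ext v
  rw [Multiset.sort_eq, hS, Multiset.coe_count, count_sortedOfCounts]

theorem sortedOfCounts_add_of_eq_one (a : ℕ) : ∀ b, (∀ i < b, c (a + 1 + i) = 1) →
    sortedOfCounts c (a + b) = sortedOfCounts c a ++ (List.range b).map (a + 1 + ·)
  | 0, _ => by simp
  | b + 1, h => by
    rw [← add_assoc, sortedOfCounts_succ,
      sortedOfCounts_add_of_eq_one a b (fun i hi => h i (by omega)), List.range_succ,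
      List.map_append, List.append_assoc, add_right_comm, h b (by omega)]
    rfl

def oddEntriesCounts (d : ℕ → ℕ) (v : ℕ) : ℕ := d v + if Even v then 1 else 0

theorem even_length_sortedOfCounts_two_mul (d : ℕ → ℕ) : ∀ N,
    Even (sortedOfCounts (fun v => 2 * d v + 1) (2 * N)).length
  | 0 => Even.zero
  | N + 1 => by
    rw [show 2 * (N + 1) = 2 * N + 1 + 1 by ring, sortedOfCounts_succ, sortedOfCounts_succ]
    simpa [parity_simps, Nat.even_add_one] using even_length_sortedOfCounts_two_mul d N

theorem oddEntries_sortedOfCounts_two_mul (d : ℕ → ℕ) : ∀ N,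
    oddEntries (sortedOfCounts (fun v => 2 * d v + 1) (2 * N)) =
      sortedOfCounts (oddEntriesCounts d) (2 * N)
  | 0 => rfl
  | N + 1 => by
    have hodd_val : ¬ Even (2 * N + 1) := by simp [parity_simps]
    have heven_val : Even (2 * N + 2) := by simp [parity_simps]
    rw [show 2 * (N + 1) = 2 * N + 1 + 1 by ring, sortedOfCounts_succ, sortedOfCounts_succ,
      sortedOfCounts_succ, sortedOfCounts_succ, List.append_assoc, List.append_assoc,
      oddEntries_append _ _ (even_length_sortedOfCounts_two_mul d N),
      oddEntries_sortedOfCounts_two_mul d N, oddEntries_replicate_append_replicate]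
    simp [oddEntriesCounts, hodd_val, heven_val]

theorem oddEntries_sortedOfCounts_two_mul_add_one (d : ℕ → ℕ) (N : ℕ)
    (hd : d (2 * N + 1) = 0) :
    oddEntries (sortedOfCounts (fun v => 2 * d v + 1) (2 * N + 1)) =
      sortedOfCounts (oddEntriesCounts d) (2 * N) := by
  rw [sortedOfCounts_succ, oddEntries_append _ _ (even_length_sortedOfCounts_two_mul d N),
    oddEntries_sortedOfCounts_two_mul, hd]
  exact List.append_nil _

end SortedOfCounts

section LeviDegrees

variable {ι : Type*} [Fintype ι]

theorem count_map_succ_range (n v : ℕ) :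
    (Multiset.map (· + 1) (Multiset.range n)).count v = if 1 ≤ v ∧ v ≤ n then 1 else 0 := by
  rw [Multiset.count_eq_of_nodup
    ((Multiset.nodup_range n).map fun a b h => by simpa using h)]
  congr 1
  simp only [Multiset.mem_map, Multiset.mem_range, eq_iff_iff]
  exact ⟨fun ⟨i, hi, hv⟩ => by omega, fun h => ⟨v - 1, by omega, by omega⟩⟩

theorem count_map_two_mul_succ_range (s v : ℕ) :
    (Multiset.map (fun i => 2 * (i + 1)) (Multiset.range s)).count v =
      if 1 ≤ v ∧ v ≤ 2 * s ∧ Even v then 1 else 0 := by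
  rw [Multiset.count_eq_of_nodup
    ((Multiset.nodup_range s).map fun a b h => by simpa using h)]
  congr 1
  simp only [Multiset.mem_map, Multiset.mem_range, Nat.even_iff, eq_iff_iff]
  exact ⟨fun ⟨i, hi, hv⟩ => by omega, fun h => ⟨v / 2 - 1, by omega, by omega⟩⟩

theorem count_bind_map_succ_range (r : ι → ℕ) (v : ℕ) :
    (Finset.univ.val.bind fun j => Multiset.map (· + 1) (Multiset.range (r j))).count v =
      if 1 ≤ v then (Finset.univ.filter fun j => v ≤ r j).card else 0 := by
  rw [Multiset.count_bind, ← Finset.sum_eq_multiset_sum]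
  simp only [count_map_succ_range]
  split_ifs with hv
  · rw [Finset.card_filter]
    simp [hv]
  · simp [hv]

end LeviDegrees

end TypeBLevi

open TypeBLevi in
theorem typeB_levi_degrees_explicit_general (k s n : ℕ) (r : Fin k → ℕ)
    (mm : ℕ) (hmm : mm = Finset.univ.sup r) (hms : mm ≤ 2 * s)
    (δ : ℕ → ℕ) (hδ : ∀ i, δ i = (Finset.univ.filter (fun j : Fin k => i ≤ r j)).card)
    (Mt M : Multiset ℕ)
    (hMt : Mt =
      (Finset.univ.val.bind fun j : Fin k => Multiset.map (· + 1) (Multiset.range (r j))) +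
      (Finset.univ.val.bind fun j : Fin k => Multiset.map (· + 1) (Multiset.range (r j))) +
      Multiset.map (· + 1) (Multiset.range (2 * s + 1)))
    (hM : M =
      (Finset.univ.val.bind fun j : Fin k => Multiset.map (· + 1) (Multiset.range (r j))) +
      Multiset.map (fun i => 2 * (i + 1)) (Multiset.range s)) :
    (Multiset.sort Mt (· ≤ ·) =
      ((List.range mm).flatMap fun i => List.replicate (2 * δ (i + 1) + 1) (i + 1)) ++
        (List.range (2 * s + 1 - mm)).map (fun i => mm + 1 + i)) ∧
    (∀ i, 1 ≤ i → i ≤ n →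
      (Multiset.sort Mt (· ≤ ·)).getD (2 * i - 1) 0 =
        (Multiset.sort M (· ≤ ·)).getD (i - 1) 0) := by
  have hδ_zero : ∀ v, mm < v → δ v = 0 := fun v hv => by
    rw [hδ, Finset.card_eq_zero, Finset.filter_eq_empty_iff]
    exact fun j _ => by have := Finset.le_sup (f := r) (Finset.mem_univ j); omega
  have hsortMt : Mt.sort (· ≤ ·) = sortedOfCounts (fun v => 2 * δ v + 1) (2 * s + 1) := by
    refine sort_eq_sortedOfCounts _ _ _ fun v => ?_
    have := hδ_zero v
    simp only [hMt, Multiset.count_add, count_bind_map_succ_range, count_map_succ_range, ← hδ]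
    split_ifs <;> omega
  have hsortM : M.sort (· ≤ ·) = sortedOfCounts (oddEntriesCounts δ) (2 * s) := by
    refine sort_eq_sortedOfCounts _ _ _ fun v => ?_
    have := hδ_zero v
    simp only [hM, Multiset.count_add, count_bind_map_succ_range, count_map_two_mul_succ_range,
      oddEntriesCounts, Nat.even_iff, ← hδ]
    split_ifs <;> omega
  refine ⟨?_, fun i hi _ => ?_⟩
  · have hsplit := sortedOfCounts_add_of_eq_one (fun v => 2 * δ v + 1) mm (2 * s + 1 - mm)
      fun i _ => by simp [hδ_zero (mm + 1 + i) (by omega)]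
    rwa [Nat.add_sub_cancel' (by omega), ← hsortMt] at hsplit
  · obtain ⟨j, rfl⟩ : ∃ j, i = j + 1 := ⟨i - 1, by omega⟩
    rw [hsortMt, hsortM, ← oddEntries_sortedOfCounts_two_mul_add_one δ s (hδ_zero _ (by omega)),
      oddEntries_getD]
    rfl

/-- Let `n = r_1 + ... + r_k + s`, and let `δ_1 ≥ ... ≥ δ_m` be the conjugate partition of
`(r_1,...,r_k)` (so `δ_i = #{j : r_j ≥ i}` and `m = max r_j`). Assume `m` is even and
`m ≤ 2s`. Then the sorted rearrangement `m̃_0 ≤ ... ≤ m̃_{2n}` of the multiset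
`⋃_j {1..r_j} ∪ ⋃_j {1..r_j} ∪ {1..2s+1}` (Levi fundamental degrees for the partition
`(r_1,r_1,...,r_k,r_k,2s+1)` of `2n+1`) is: each value `i = 1,...,m` repeated `2δ_i + 1`
times, followed by `m+1, m+2, ..., 2s+1`; moreover its odd-index subsequence
`m̃_1, m̃_3, ..., m̃_{2n-1}` equals the sorted rearrangement of
`⋃_j {1..r_j} ∪ {2,4,...,2s}`. -/
theorem typeB_levi_degrees_explicit (k s n : ℕ) (r : Fin k → ℕ) (hr : ∀ j, 0 < r j)
    (hn : (∑ j, r j) + s = n)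
    (mm : ℕ) (hmm : mm = Finset.univ.sup r) (hmeven : Even mm) (hms : mm ≤ 2 * s)
    (δ : ℕ → ℕ) (hδ : ∀ i, δ i = (Finset.univ.filter (fun j : Fin k => i ≤ r j)).card)
    (Mt M : Multiset ℕ)
    (hMt : Mt =
      (Finset.univ.val.bind fun j : Fin k => Multiset.map (· + 1) (Multiset.range (r j))) +
      (Finset.univ.val.bind fun j : Fin k => Multiset.map (· + 1) (Multiset.range (r j))) +
      Multiset.map (· + 1) (Multiset.range (2 * s + 1)))
    (hM : M =
      (Finset.univ.val.bind fun j : Fin k => Multiset.map (· + 1) (Multiset.range (r j))) +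
      Multiset.map (fun i => 2 * (i + 1)) (Multiset.range s)) :
    (Multiset.sort Mt (· ≤ ·) =
      ((List.range mm).flatMap fun i => List.replicate (2 * δ (i + 1) + 1) (i + 1)) ++
        (List.range (2 * s + 1 - mm)).map (fun i => mm + 1 + i)) ∧
    (∀ i, 1 ≤ i → i ≤ n →
      (Multiset.sort Mt (· ≤ ·)).getD (2 * i - 1) 0 =
        (Multiset.sort M (· ≤ ·)).getD (i - 1) 0) :=
  typeB_levi_degrees_explicit_general k s n r mm hmm hms δ hδ Mt M hMt hM
end

section
/- Let 𝒪 = ℂ[[t]], 𝒦 = ℂ((t)), and let 𝔭 ⊂ sl_4(ℂ) be the parabolic of matrices whose last row vanishes except in the last entry, with nilpotent radical 𝔫 consisting of matrices supported in the first three entries of the last column. For A ∈ t^{−1}𝔫 + sl_4(𝒪), the characteristic coefficients satisfy c_2(A) ∈ t^{−1}𝒪, c_3(A) ∈ t^{−1}𝒪, and c_4(A) ∈ t^{−1}𝒪, where det(λI − A) = λ⁴ + c_2(A)λ² + c_3(A)λ + c_4(A). Moreover, there exists A ∈ t^{−1}𝔫 + sl_4(𝒪) such that the trace Tr(A⁴)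 has a pole of order 2 at t = 0. -/
/-!
Write `A = t⁻¹Y + Z` with `Y` supported off the diagonal in the last column and `tr Z = 0`.
Then `tr A = tr Z = 0`, so `c₃ = 0`. Multiplying the last column of `λ - A` by `t` clears the
pole, so `t · det(λ - A)` is the determinant of a matrix over `𝒪[λ]` and every `t · cⱼ` lies
in `𝒪`. For the example take `A = t⁻¹E₁₄ + E₄₁`: then `A² = t⁻¹(E₁₁ + E₄₄)` and
`tr A⁴ = 2t⁻²`.
-/

open Matrix

/-- Membership in `t⁻¹𝔫 + sl₄(𝒪) ⊂ sl₄(𝒦)`, where `𝒦 = ℂ((t))` (Laurent series),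
`𝒪 = ℂ[[t]]`, and `𝔫 ⊂ sl₄` consists of matrices supported in the first three entries of
the last column. -/
def InParahoricPerp (A : Matrix (Fin 4) (Fin 4) (LaurentSeries ℂ)) : Prop :=
  ∃ (y : Matrix (Fin 4) (Fin 4) ℂ) (z : Matrix (Fin 4) (Fin 4) (PowerSeries ℂ)),
    (∀ i j : Fin 4, ¬(j = 3 ∧ i ≠ 3) → y i j = 0) ∧ Matrix.trace z = 0 ∧
    A = (HahnSeries.single (-1 : ℤ) (1 : ℂ) : LaurentSeries ℂ) •
          y.map (fun c => HahnSeries.ofPowerSeries ℤ ℂ (PowerSeries.C c)) +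
        z.map (HahnSeries.ofPowerSeries ℤ ℂ)

namespace Matrix

open Polynomial

variable {n R S : Type*} [Fintype n] [DecidableEq n] [CommRing R] [CommRing S]

theorem det_mem_subring (T : Subring R) {M : Matrix n n R} (hM : ∀ i j, M i j ∈ T) :
    M.det ∈ T := by
  rw [det_apply]
  exact T.sum_mem fun σ _ => T.zsmul_mem (T.prod_mem fun i _ => hM _ _) _

theorem mul_det_mem_of_mul_col_mem (T : Subring R) (M : Matrix n n R) (k : n) (s : R)
    (hcol : ∀ i, s * M i k ∈ T) (hrest : ∀ i j, j ≠ k → M i j ∈ T) : s * M.det ∈ T := by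
  have h := det_updateCol_smul M k s fun i => M i k
  rw [updateCol_eq_self] at h
  rw [← h]
  refine det_mem_subring T fun i j => ?_
  rcases eq_or_ne j k with rfl | hj
  · simpa using hcol i
  · simpa [updateCol_ne hj] using hrest i j hj

theorem mul_charpoly_coeff_mem_range (f : S →+* R) (A : Matrix n n R) (k : n) {t : R}
    (ht : t ∈ f.range) (hcol : ∀ i, t * A i k ∈ f.range) (hrest : ∀ i j, j ≠ k → A i j ∈ f.range)
    (j : ℕ) : t * A.charpoly.coeff j ∈ f.range := by
  have hmem : ∀ {a : R}, a ∈ f.range → C a ∈ liftsRing f := fun ⟨b, hb⟩ =>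
    hb ▸ (lifts_iff_liftsRing f _).mp (C_mem_lifts f b)
  have hX : (X : R[X]) ∈ liftsRing f := (lifts_iff_liftsRing f _).mp (X_mem_lifts f)
  have hdiag : ∀ i j, (diagonal fun _ : n => (X : R[X])) i j ∈ liftsRing f := fun i j => by
    rw [diagonal_apply]; split_ifs
    exacts [hX, zero_mem _]
  have hC := mul_det_mem_of_mul_col_mem (liftsRing f) (charmatrix A) k (C t)
    (fun i => by
      rw [charmatrix_apply, mul_sub, ← C_mul]
      exact sub_mem (mul_mem (hmem ht) (hdiag i k)) (hmem (hcol i)))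
    (fun i j hj => by rw [charmatrix_apply]; exact sub_mem (hdiag i j) (hmem (hrest i j hj)))
  rw [← lifts_iff_liftsRing, lifts_iff_coeff_lifts] at hC
  simpa [charpoly, coeff_C_mul] using hC j

end Matrix

namespace InParahoricPerp

variable {A : Matrix (Fin 4) (Fin 4) (LaurentSeries ℂ)}

theorem trace_eq_zero (hA : InParahoricPerp A) : A.trace = 0 := by
  obtain ⟨y, z, hy, hz, rfl⟩ := hA
  have hdiag : ∀ i, y i i = 0 := fun i => hy i i fun h => h.2 h.1
  rw [trace_add, trace_smul, ← AddMonoidHom.map_trace, hz]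
  simp [trace, hdiag]

theorem mul_charpoly_coeff_mem_range (hA : InParahoricPerp A) (j : ℕ) :
    (HahnSeries.single (1 : ℤ) (1 : ℂ) : LaurentSeries ℂ) * A.charpoly.coeff j ∈
      Set.range (HahnSeries.ofPowerSeries ℤ ℂ) := by
  obtain ⟨y, z, hy, -, rfl⟩ := hA
  refine Matrix.mul_charpoly_coeff_mem_range (HahnSeries.ofPowerSeries ℤ ℂ) _ 3
    ⟨PowerSeries.X, HahnSeries.ofPowerSeries_X⟩
    (fun i => ⟨PowerSeries.C (y i 3) + PowerSeries.X * z i 3, ?_⟩) (fun i j hj => ⟨z i j, ?_⟩) j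
  · simp [mul_add]
  · simp [hy i j fun h => hj h.1]

end InParahoricPerp

theorem exists_inParahoricPerp_order_trace_pow_four_eq_neg_two :
    ∃ A : Matrix (Fin 4) (Fin 4) (LaurentSeries ℂ), InParahoricPerp A ∧
      (A ^ 4).trace.order = -2 := by
  set u : LaurentSeries ℂ := HahnSeries.single (-1) 1
  refine ⟨!![0, 0, 0, u; 0, 0, 0, 0; 0, 0, 0, 0; 1, 0, 0, 0],
    ⟨single 0 3 1, single 3 0 1, ?_, ?_, ?_⟩, ?_⟩
  · intro i j h
    fin_cases i <;> fin_cases j <;> simp_all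
  · simp [trace_single_eq_of_ne]
  · ext i j
    fin_cases i <;> fin_cases j <;> simp [u]
  · have hu : u * u + u * u = HahnSeries.single (-2) 2 := by
      simp only [u, HahnSeries.single_mul_single, ← HahnSeries.single_add]; norm_num
    have htr :
        (!![0, 0, 0, u; 0, 0, 0, 0; 0, 0, 0, 0; 1, 0, 0, 0] ^ 4).trace = u * u + u * u := by
      simp [pow_succ, trace, Fin.sum_univ_four]
    rw [htr, hu, HahnSeries.order_single two_ne_zero]

/-- For every `A ∈ t⁻¹𝔫 + sl₄(𝒪)`, writing `det(λI - A) = λ⁴ + c₂λ² + c₃λ + c₄`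
(the `λ³`-coefficient vanishes), the coefficients satisfy `c₂, c₃, c₄ ∈ t⁻¹𝒪`; moreover
there exists such an `A` for which `Tr(A⁴)` has a pole of order `2` at `t = 0`. -/
theorem sl4_example :
    (∀ A : Matrix (Fin 4) (Fin 4) (LaurentSeries ℂ), InParahoricPerp A →
      A.charpoly.coeff 3 = 0 ∧
      ∀ j ∈ ({0, 1, 2} : Finset ℕ),
        (HahnSeries.single (1 : ℤ) (1 : ℂ) : LaurentSeries ℂ) * A.charpoly.coeff j ∈
          Set.range (HahnSeries.ofPowerSeries ℤ ℂ)) ∧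
    (∃ A : Matrix (Fin 4) (Fin 4) (LaurentSeries ℂ), InParahoricPerp A ∧
      (Matrix.trace (A ^ 4)).order = (-2 : ℤ)) := by
  refine ⟨fun A hA => ⟨?_, fun j _ => hA.mul_charpoly_coeff_mem_range j⟩,
    exists_inParahoricPerp_order_trace_pow_four_eq_neg_two⟩
  simpa [hA.trace_eq_zero] using (trace_eq_neg_charpoly_coeff A).symm
end
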